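/- Let n, d ≥ 1 and k_0 ≥ 0 be integers and fix ζ ∈ ℂ with |ζ| = 1. Let Q and S be n×n complex matrices with Q invertible, let G̃₂ be the 2n×2n matrix whose (2i−1,2j−1) entry is δ_{ij}, (2i,2j−1) entry is −i·δ_{ij}, (2i−1,2j) entry is Q_{ij} + S_{ij}, and (2i,2j) entry is i·Q_{ij} − i·S_{ij}, and let B (d×2n), C (d×d) and E (2n×d) be arbitrary complex matrices. Define the (2n+2d)×(2n+2d) block upper triangular matrix G̃ with diagonal blocks (1/2)·I_d, G̃₂, −iζ^{k_0}·I_d and upper blocks B, C, E. Then G̃ and its entrywise conjugate conj(G̃) are invertible, and det(−(conj G̃)^{-1} · G̃) = (−1)^{n+d} · ζ^{2dk_0} · det Q / conj(det Q). (Consequently, the Maslov index of the Riemann–Hilbert problem defined by such a matrix map on the unit circle equals the winding number of det(−(conj Q)^{-1}Q) plus 2dk_0.) -/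

import Mathlib

open ComplexConjugate

noncomputable section

/-- The `2n × 2n` matrix `G̃₂`: rows/columns are indexed by pairs `(i,a)` with
`a = 0` corresponding to the odd row/column `2i−1` and `a = 1` to the even one `2i`. -/
def Gt2 (n : ℕ) (Q S : Matrix (Fin n) (Fin n) ℂ) :
    Matrix (Fin n × Fin 2) (Fin n × Fin 2) ℂ :=
  Matrix.of fun p q =>
    if p.2 = 0 then
      (if q.2 = 0 then (if p.1 = q.1 then (1 : ℂ) else 0)
       else Q p.1 q.1 + S p.1 q.1)
    else
      (if q.2 = 0 then (if p.1 = q.1 then -Complex.I else 0)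
       else Complex.I * Q p.1 q.1 - Complex.I * S p.1 q.1)

/-- The block upper triangular matrix `G̃` of size `(2n+2d) × (2n+2d)`, with diagonal
blocks `(1/2)·I_d`, `G̃₂`, `−iζ^{k₀}·I_d` and upper blocks `B`, `C`, `E`. -/
def Gt (n d k0 : ℕ) (ζ : ℂ) (Q S : Matrix (Fin n) (Fin n) ℂ)
    (B : Matrix (Fin d) (Fin n × Fin 2) ℂ) (C : Matrix (Fin d) (Fin d) ℂ)
    (E : Matrix (Fin n × Fin 2) (Fin d) ℂ) :
    Matrix (Fin d ⊕ ((Fin n × Fin 2) ⊕ Fin d)) (Fin d ⊕ ((Fin n × Fin 2) ⊕ Fin d)) ℂ :=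
  Matrix.of fun p q =>
    match p, q with
    | .inl a, .inl b => if a = b then (1 / 2 : ℂ) else 0
    | .inl a, .inr (.inl q') => B a q'
    | .inl a, .inr (.inr b) => C a b
    | .inr (.inl p'), .inr (.inl q') => Gt2 n Q S p' q'
    | .inr (.inl p'), .inr (.inr b) => E p' b
    | .inr (.inr a), .inr (.inr b) => if a = b then -Complex.I * ζ ^ k0 else 0
    | _, _ => 0

/-!
`G̃` is block upper triangular, so `det G̃ = 2⁻ᵈ · det G̃₂ · (−iζ^{k₀})ᵈ`. Separating odd and even
indices puts `G̃₂` in the block form `[[1, Q + S], [−i, i(Q − S)]]`, whose Schur complement is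
`2iQ`. Since `G̃` has even size, `det(−(conj G̃)⁻¹ G̃) = det G̃ / conj (det G̃)`, and this ratio is
multiplicative: `2i / conj (2i) = −1`, and `w / conj w = w²` for `w = −iζ^{k₀}` of modulus one.
-/

open Matrix

lemma Matrix.det_neg_inv_map_mul {ι K : Type*} [Fintype ι] [DecidableEq ι] [Field K]
    (f : K →+* K) (M : Matrix ι ι K) :
    (-((M.map f)⁻¹ * M)).det = (-1) ^ Fintype.card ι * M.det / f M.det := by
  rw [det_neg, det_mul, det_nonsing_inv, Ring.inverse_eq_inv, ← RingHom.mapMatrix_apply,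
    ← RingHom.map_det]
  ring

def Equiv.sumEquivProdFinTwo (α : Type*) : α ⊕ α ≃ α × Fin 2 where
  toFun := Sum.elim (fun a => (a, 0)) (fun a => (a, 1))
  invFun p := if p.2 = 0 then .inl p.1 else .inr p.1
  left_inv x := by rcases x with a | a <;> simp
  right_inv p := by rcases p with ⟨a, i⟩; fin_cases i <;> simp

lemma Gt2_eq_reindex_fromBlocks (n : ℕ) (Q S : Matrix (Fin n) (Fin n) ℂ) :
    Gt2 n Q S = reindex (Equiv.sumEquivProdFinTwo _) (Equiv.sumEquivProdFinTwo _)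
      (fromBlocks 1 (Q + S) (-Complex.I • 1) (Complex.I • Q - Complex.I • S)) := by
  ext ⟨i, a⟩ ⟨j, b⟩
  fin_cases a <;> fin_cases b <;>
    simp [Gt2, Equiv.sumEquivProdFinTwo, one_apply, apply_ite (fun x : ℂ => -x)]

lemma det_Gt2 (n : ℕ) (Q S : Matrix (Fin n) (Fin n) ℂ) :
    (Gt2 n Q S).det = (2 * Complex.I) ^ n * Q.det := by
  have schur : Complex.I • Q - Complex.I • S - (-Complex.I • 1) * (Q + S) =
      (2 * Complex.I) • Q := by
    rw [smul_mul, Matrix.one_mul]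
    module
  rw [Gt2_eq_reindex_fromBlocks, det_reindex_self, det_fromBlocks_one₁₁, schur, det_smul,
    Fintype.card_fin]

lemma Gt_eq_fromBlocks (n d k0 : ℕ) (ζ : ℂ) (Q S : Matrix (Fin n) (Fin n) ℂ)
    (B : Matrix (Fin d) (Fin n × Fin 2) ℂ) (C : Matrix (Fin d) (Fin d) ℂ)
    (E : Matrix (Fin n × Fin 2) (Fin d) ℂ) :
    Gt n d k0 ζ Q S B C E =
      fromBlocks ((2⁻¹ : ℂ) • 1) (of fun a => Sum.elim (B a) (C a)) 0
        (fromBlocks (Gt2 n Q S) E 0 ((-Complex.I * ζ ^ k0) • 1)) := by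
  ext (a | p | a) (b | q | b) <;>
    simp [Gt, one_apply, apply_ite (fun x : ℂ => -x)]

lemma det_Gt (n d k0 : ℕ) (ζ : ℂ) (Q S : Matrix (Fin n) (Fin n) ℂ)
    (B : Matrix (Fin d) (Fin n × Fin 2) ℂ) (C : Matrix (Fin d) (Fin d) ℂ)
    (E : Matrix (Fin n × Fin 2) (Fin d) ℂ) :
    (Gt n d k0 ζ Q S B C E).det =
      2⁻¹ ^ d * (2 * Complex.I) ^ n * (-Complex.I * ζ ^ k0) ^ d * Q.det := by
  rw [Gt_eq_fromBlocks, det_fromBlocks_zero₂₁, det_fromBlocks_zero₂₁, det_Gt2, det_smul,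
    det_smul, det_one, Fintype.card_fin]
  ring

lemma Complex.div_conj_of_norm_eq_one {z : ℂ} (hz : ‖z‖ = 1) : z / conj z = z ^ 2 := by
  rw [← Complex.inv_eq_conj hz, div_inv_eq_mul, sq]

lemma det_Gt_div_conj (n d k0 : ℕ) {ζ : ℂ} (hζ : ‖ζ‖ = 1) (Q S : Matrix (Fin n) (Fin n) ℂ)
    (B : Matrix (Fin d) (Fin n × Fin 2) ℂ) (C : Matrix (Fin d) (Fin d) ℂ)
    (E : Matrix (Fin n × Fin 2) (Fin d) ℂ) :
    (Gt n d k0 ζ Q S B C E).det / conj (Gt n d k0 ζ Q S B C E).det =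
      (-1) ^ (n + d) * ζ ^ (2 * d * k0) * Q.det / conj Q.det := by
  set w := -Complex.I * ζ ^ k0 with hw_def
  have hw : ‖w‖ = 1 := by simp [w, hζ]
  have hw2 : w ^ 2 = -ζ ^ (2 * k0) := by
    rw [hw_def, mul_pow, neg_sq, Complex.I_sq, ← pow_mul, mul_comm k0]
    ring
  have h2 : (2⁻¹ : ℂ) / conj 2⁻¹ = 1 := by
    rw [map_inv₀, map_ofNat, div_self (by norm_num)]
  have h2I : 2 * Complex.I / conj (2 * Complex.I) = -1 := by
    rw [map_mul, Complex.conj_I, map_ofNat, mul_neg, div_neg, div_self (by simp)]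
  rw [det_Gt, map_mul, map_mul, map_mul, map_pow, map_pow, map_pow, mul_div_mul_comm,
    mul_div_mul_comm, mul_div_mul_comm, ← div_pow, ← div_pow, ← div_pow, h2, h2I,
    Complex.div_conj_of_norm_eq_one hw, hw2]
  ring

theorem stmt15_general (n d : ℕ) (k0 : ℕ)
    (ζ : ℂ) (hζ : ‖ζ‖ = 1)
    (Q S : Matrix (Fin n) (Fin n) ℂ) (hQ : IsUnit Q)
    (B : Matrix (Fin d) (Fin n × Fin 2) ℂ) (C : Matrix (Fin d) (Fin d) ℂ)
    (E : Matrix (Fin n × Fin 2) (Fin d) ℂ) :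
    IsUnit (Gt n d k0 ζ Q S B C E) ∧
    IsUnit ((Gt n d k0 ζ Q S B C E).map (starRingEnd ℂ)) ∧
    (-(((Gt n d k0 ζ Q S B C E).map (starRingEnd ℂ))⁻¹ * Gt n d k0 ζ Q S B C E)).det
      = (-1) ^ (n + d) * ζ ^ (2 * d * k0) * Q.det / conj Q.det := by
  have hζ0 : ζ ≠ 0 := norm_ne_zero_iff.mp (by simp [hζ])
  have hG : IsUnit (Gt n d k0 ζ Q S B C E) := by
    rw [isUnit_iff_isUnit_det, isUnit_iff_ne_zero, det_Gt]
    simp [Complex.I_ne_zero, hζ0, ((isUnit_iff_isUnit_det Q).mp hQ).ne_zero]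
  refine ⟨hG, hG.map (starRingEnd ℂ).mapMatrix, ?_⟩
  have hcard : Even (Fintype.card (Fin d ⊕ ((Fin n × Fin 2) ⊕ Fin d))) :=
    ⟨n + d, by simp only [Fintype.card_sum, Fintype.card_prod, Fintype.card_fin]; ring⟩
  rw [det_neg_inv_map_mul, hcard.neg_one_pow, one_mul, det_Gt_div_conj n d k0 hζ]

theorem stmt15 (n d : ℕ) (hn : 1 ≤ n) (hd : 1 ≤ d) (k0 : ℕ)
    (ζ : ℂ) (hζ : ‖ζ‖ = 1)
    (Q S : Matrix (Fin n) (Fin n) ℂ) (hQ : IsUnit Q)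
    (B : Matrix (Fin d) (Fin n × Fin 2) ℂ) (C : Matrix (Fin d) (Fin d) ℂ)
    (E : Matrix (Fin n × Fin 2) (Fin d) ℂ) :
    IsUnit (Gt n d k0 ζ Q S B C E) ∧
    IsUnit ((Gt n d k0 ζ Q S B C E).map (starRingEnd ℂ)) ∧
    (-(((Gt n d k0 ζ Q S B C E).map (starRingEnd ℂ))⁻¹ * Gt n d k0 ζ Q S B C E)).det
      = (-1) ^ (n + d) * ζ ^ (2 * d * k0) * Q.det / conj Q.det :=
  stmt15_general n d k0 ζ hζ Q S hQ B C E
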